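/- arXiv:1207.3237 — 5 statements merged into one kernel-verified Lean document; each statement's English description precedes it below -/
import Mathlib

section
/- Let (p_k)_{k∈ℕ} be nonnegative reals with Σ_{k≥0} p_k = 1, let φ(θ) = Σ_{k≥0} p_k e^{ikθ} be the associated characteristic function, and set γ² = Σ_{k≥0} p_{2k}p_{2k+1}/(p_{2k} + p_{2k+1}), where a summand is 0 when p_{2k} = p_{2k+1} = 0. Then for every θ ∈ [−π, π], |φ(θ)| ≤ exp(−γ²θ²/5). -/
open Complex

/-- The characteristic exponent coefficient `γ²` of a pmf on `ℕ`. -/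
noncomputable def gammaSq (p : ℕ → ℝ) : ℝ :=
  ∑' j : ℕ, p (2 * j) * p (2 * j + 1) / (p (2 * j) + p (2 * j + 1))

/-!
Group the series for `φ(θ)` into consecutive pairs. Up to a unimodular factor, the pair
`(p₂ⱼ, p₂ⱼ₊₁)` contributes `a + b e^{iθ}` with `a = p₂ⱼ, b = p₂ⱼ₊₁`, and
`|a + b e^{iθ}|² = (a + b)² - 2(1 - cos θ) ab ≤ ((a + b) - (1 - cos θ) ab/(a + b))²`.
Summing over `j` gives `|φ(θ)| ≤ 1 - (1 - cos θ) γ² ≤ exp(-(1 - cos θ) γ²)`, and Jordan's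
inequality `1 - cos θ ≥ 2θ²/π² ≥ θ²/5` on `[-π, π]` finishes the proof.
-/

theorem HasSum.add_consecutive_pairs {E : Type*} [AddCommGroup E] [UniformSpace E]
    [IsUniformAddGroup E] [CompleteSpace E] [T2Space E] {f : ℕ → E} {a : E} (hf : HasSum f a) :
    HasSum (fun j ↦ f (2 * j) + f (2 * j + 1)) a := by
  have heven : Summable fun j ↦ f (2 * j) :=
    hf.summable.comp_injective (mul_right_injective₀ two_ne_zero)
  have hodd : Summable fun j ↦ f (2 * j + 1) :=
    hf.summable.comp_injective ((add_left_injective 1).comp (mul_right_injective₀ two_ne_zero))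
  convert heven.hasSum.add hodd.hasSum
  exact hf.unique (heven.hasSum.even_add_odd hodd.hasSum)

lemma mul_div_add_mul_add {a b : ℝ} (ha : 0 ≤ a) (hb : 0 ≤ b) :
    a * b / (a + b) * (a + b) = a * b := by
  rcases (add_nonneg ha hb).eq_or_lt with h | h
  · obtain ⟨rfl, rfl⟩ : a = 0 ∧ b = 0 := ⟨by linarith, by linarith⟩
    simp
  · exact div_mul_cancel₀ _ h.ne'

lemma mul_div_add_le_add_div_two {a b : ℝ} (ha : 0 ≤ a) (hb : 0 ≤ b) :
    a * b / (a + b) ≤ (a + b) / 2 := by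
  rcases (add_nonneg ha hb).eq_or_lt with h | h
  · simp [← h]
  · rw [div_le_div_iff₀ h two_pos]
    nlinarith [sq_nonneg (a - b)]

lemma normSq_add_mul_exp_mul_I (a b θ : ℝ) :
    normSq (a + b * exp (θ * I)) = (a + b) ^ 2 - 2 * (1 - Real.cos θ) * (a * b) := by
  have h : (a : ℂ) + b * exp (θ * I) = ↑(a + b * Real.cos θ) + ↑(b * Real.sin θ) * I := by
    rw [exp_mul_I, ← ofReal_cos, ← ofReal_sin]
    push_cast
    ring
  rw [h, normSq_add_mul_I]
  linear_combination b ^ 2 * Real.sin_sq_add_cos_sq θ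

lemma norm_add_mul_exp_mul_I_le {a b : ℝ} (ha : 0 ≤ a) (hb : 0 ≤ b) (θ : ℝ) :
    ‖(a + b * exp (θ * I) : ℂ)‖ ≤ (a + b) - (1 - Real.cos θ) * (a * b / (a + b)) := by
  have hc₀ : 0 ≤ 1 - Real.cos θ := sub_nonneg.mpr (Real.cos_le_one θ)
  have hc₂ : 1 - Real.cos θ ≤ 2 := by linarith [Real.neg_one_le_cos θ]
  have hm := mul_div_add_le_add_div_two ha hb
  have hm₀ : 0 ≤ a * b / (a + b) := by positivity
  have hr : 0 ≤ (a + b) - (1 - Real.cos θ) * (a * b / (a + b)) := by nlinarith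
  rw [← pow_le_pow_iff_left₀ (norm_nonneg _) hr two_ne_zero, Complex.sq_norm,
    normSq_add_mul_exp_mul_I]
  nlinarith [mul_div_add_mul_add ha hb, sq_nonneg ((1 - Real.cos θ) * (a * b / (a + b)))]

lemma norm_mul_exp_add_mul_exp_succ (a b θ : ℝ) (n : ℕ) :
    ‖(a : ℂ) * exp (n * θ * I) + b * exp ((n + 1 : ℕ) * θ * I)‖ = ‖(a + b * exp (θ * I) : ℂ)‖ := by
  have hsucc : exp ((n + 1 : ℕ) * θ * I) = exp (n * θ * I) * exp (θ * I) := by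
    rw [← exp_add]; push_cast; ring_nf
  have h : (a : ℂ) * exp (n * θ * I) + b * exp ((n + 1 : ℕ) * θ * I)
      = exp (↑(n * θ) * I) * (a + b * exp (θ * I)) := by
    rw [hsucc]; push_cast; ring
  rw [h, norm_mul, norm_exp_ofReal_mul_I, one_mul]

lemma sq_div_five_le_one_sub_cos {θ : ℝ} (hθ : |θ| ≤ Real.pi) : θ ^ 2 / 5 ≤ 1 - Real.cos θ := by
  have hπ : Real.pi ^ 2 < 10 := by nlinarith [Real.pi_lt_d2, Real.pi_pos]
  have hinv : (1 : ℝ) / 5 ≤ 2 / Real.pi ^ 2 := by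
    rw [div_le_div_iff₀ (by norm_num) (by positivity)]
    linarith
  nlinarith [Real.cos_le_one_sub_mul_cos_sq hθ, sq_nonneg θ]

theorem norm_charFun_le_one_sub_mul_gammaSq {p : ℕ → ℝ} (hp : ∀ k, 0 ≤ p k) (hsum : HasSum p 1)
    (θ : ℝ) : ‖∑' k : ℕ, (p k : ℂ) * exp ((k : ℂ) * θ * I)‖
      ≤ 1 - (1 - Real.cos θ) * gammaSq p := by
  set q : ℕ → ℝ := fun j ↦ p (2 * j) + p (2 * j + 1)
  set g : ℕ → ℝ := fun j ↦ p (2 * j) * p (2 * j + 1) / (p (2 * j) + p (2 * j + 1))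
  have hq : HasSum q 1 := hsum.add_consecutive_pairs
  have hg : HasSum g (gammaSq p) := by
    refine (Summable.of_nonneg_of_le (fun j ↦ ?_) (fun j ↦ ?_) hq.summable).hasSum
    · have := hp (2 * j); have := hp (2 * j + 1); positivity
    · have := mul_div_add_le_add_div_two (hp (2 * j)) (hp (2 * j + 1))
      have := hp (2 * j); have := hp (2 * j + 1)
      simp only [g, q]; linarith
  have hφ : Summable fun k : ℕ ↦ (p k : ℂ) * exp ((k : ℂ) * θ * I) := by
    refine Summable.of_norm (hsum.summable.congr fun k ↦ ?_)
    rw [norm_mul, norm_real, Real.norm_of_nonneg (hp k), ← ofReal_natCast, ← ofReal_mul,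
      norm_exp_ofReal_mul_I, mul_one]
  rw [← hφ.hasSum.add_consecutive_pairs.tsum_eq]
  refine tsum_of_norm_bounded (hq.sub (hg.mul_left (1 - Real.cos θ))) fun j ↦ ?_
  rw [norm_mul_exp_add_mul_exp_succ]
  exact norm_add_mul_exp_mul_I_le (hp _) (hp _) θ

theorem stmt11 (p : ℕ → ℝ) (hp : ∀ k, 0 ≤ p k) (hsum : HasSum p 1) :
    ∀ θ ∈ Set.Icc (-Real.pi) Real.pi,
      ‖∑' k : ℕ, (p k : ℂ) * Complex.exp ((k : ℂ) * θ * Complex.I)‖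
        ≤ Real.exp (-(gammaSq p) * θ ^ 2 / 5) := by
  intro θ hθ
  have hγ : 0 ≤ gammaSq p := tsum_nonneg fun j ↦ by
    have := hp (2 * j); have := hp (2 * j + 1); positivity
  have hcos := sq_div_five_le_one_sub_cos (abs_le.mpr hθ)
  calc _ ≤ 1 - (1 - Real.cos θ) * gammaSq p := norm_charFun_le_one_sub_mul_gammaSq hp hsum θ
    _ ≤ Real.exp (-((1 - Real.cos θ) * gammaSq p)) := by
      linarith [Real.add_one_le_exp (-((1 - Real.cos θ) * gammaSq p))]
    _ ≤ Real.exp (-(gammaSq p) * θ ^ 2 / 5) := by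
      gcongr
      nlinarith
end

section
/- Let (p_k)_{k∈ℕ} be nonnegative reals with Σ_{k≥0} p_k = 1 and set γ² = Σ_{k≥0} p_{2k}p_{2k+1}/(p_{2k} + p_{2k+1}), where a summand is 0 when p_{2k} = p_{2k+1} = 0. Then γ² ≤ 1/4; moreover, if X is an ℕ-valued random variable with P(X = k) = p_k and finite second moment, then γ² ≤ Var X. -/
/-!
For `p, q ≥ 0` and every real `a`, `p q / (p + q) ≤ p a² + q (a + 1)²`. Applying this to each pair
`(p_{2j}, p_{2j+1})` with `a = 2j - c` and summing gives `γ² ≤ ∑ pₙ (n - c)² = 𝔼[(X - c)²]` for every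
real `c`; `c = 𝔼 X` gives the variance bound. Taking `a = -1/2` in every pair instead bounds each
summand of `γ²` by `(p_{2j} + p_{2j+1}) / 4`, whence `γ² ≤ 1/4`.
-/

open MeasureTheory ProbabilityTheory

-- `(p + q) (p a² + q (a + 1)²) - p q = (p a + q (a + 1))²`
lemma mul_div_add_le_mul_sq_add_mul_add_one_sq {p q : ℝ} (hp : 0 ≤ p) (hq : 0 ≤ q) (a : ℝ) :
    p * q / (p + q) ≤ p * a ^ 2 + q * (a + 1) ^ 2 := by
  rcases (add_nonneg hp hq).eq_or_lt with h | h
  · rw [← h, div_zero]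
    positivity
  · rw [div_le_iff₀ h]
    nlinarith [sq_nonneg (p * a + q * (a + 1))]

lemma gammaSq_le_of_hasSum {p f : ℕ → ℝ} {s : ℝ} (hp : ∀ k, 0 ≤ p k) (hf : HasSum f s)
    (hle : ∀ j, p (2 * j) * p (2 * j + 1) / (p (2 * j) + p (2 * j + 1))
      ≤ f (2 * j) + f (2 * j + 1)) :
    gammaSq p ≤ s := by
  have he : Summable fun j => f (2 * j) := hf.summable.comp_injective fun a b h => by omega
  have ho : Summable fun j => f (2 * j + 1) := hf.summable.comp_injective fun a b h => by omega
  have hpairs : HasSum (fun j => f (2 * j) + f (2 * j + 1)) s := by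
    rw [hf.unique (he.hasSum.even_add_odd ho.hasSum)]
    exact he.hasSum.add ho.hasSum
  have hnonneg : ∀ j, 0 ≤ p (2 * j) * p (2 * j + 1) / (p (2 * j) + p (2 * j + 1)) :=
    fun j => by have := hp (2 * j); have := hp (2 * j + 1); positivity
  exact hasSum_le hle (Summable.of_nonneg_of_le hnonneg hle hpairs.summable).hasSum hpairs

lemma gammaSq_le_one_div_four {p : ℕ → ℝ} (hp : ∀ k, 0 ≤ p k) (hsum : HasSum p 1) :
    gammaSq p ≤ 1 / 4 := by
  refine gammaSq_le_of_hasSum hp (hsum.div_const 4) fun j => ?_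
  convert mul_div_add_le_mul_sq_add_mul_add_one_sq (hp (2 * j)) (hp (2 * j + 1)) (-1 / 2)
    using 1
  ring

lemma gammaSq_le_of_hasSum_mul_sq_sub {p : ℕ → ℝ} (hp : ∀ k, 0 ≤ p k) {c s : ℝ}
    (h : HasSum (fun n : ℕ => p n * ((n : ℝ) - c) ^ 2) s) :
    gammaSq p ≤ s := by
  refine gammaSq_le_of_hasSum hp h fun j => ?_
  convert mul_div_add_le_mul_sq_add_mul_add_one_sq (hp (2 * j)) (hp (2 * j + 1)) (2 * j - c)
    using 1
  push_cast
  ring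

lemma hasSum_integral_countable {α E : Type*} [MeasurableSpace α] [Countable α]
    [MeasurableSingletonClass α] [NormedAddCommGroup E] [NormedSpace ℝ E] [CompleteSpace E]
    {μ : Measure α} {f : α → E} (hf : Integrable f μ) :
    HasSum (fun a => μ.real {a} • f a) (∫ a, f a ∂μ) := by
  rw [← Measure.sum_smul_dirac μ] at hf
  simpa [Measure.sum_smul_dirac, integral_smul_measure, measureReal_def] using
    hasSum_integral_measure hf

lemma hasSum_integral_comp_of_nat {Ω E : Type*} [MeasurableSpace Ω] [NormedAddCommGroup E]
    [NormedSpace ℝ E] [CompleteSpace E] {μ : Measure Ω} {X : Ω → ℕ} (hX : Measurable X)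
    {g : ℕ → E} (hg : Integrable (fun ω => g (X ω)) μ) :
    HasSum (fun n => μ.real {ω | X ω = n} • g n) (∫ ω, g (X ω) ∂μ) := by
  have hgX : Integrable g (μ.map X) :=
    (integrable_map_measure (by fun_prop) hX.aemeasurable).2 hg
  rw [← integral_map hX.aemeasurable (by fun_prop)]
  convert hasSum_integral_countable hgX using 3 with n
  rw [map_measureReal_apply hX (measurableSet_singleton n)]
  rfl

theorem stmt12 (p : ℕ → ℝ) (hp : ∀ k, 0 ≤ p k) (hsum : HasSum p 1) :
    gammaSq p ≤ 1 / 4 ∧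
    ∀ (Ω : Type) (mΩ : MeasurableSpace Ω) (μ : Measure Ω), IsProbabilityMeasure μ →
      ∀ X : Ω → ℕ, Measurable X →
        (∀ k, (μ {ω | X ω = k}).toReal = p k) →
        Integrable (fun ω => (X ω : ℝ)) μ →
        Integrable (fun ω => (X ω : ℝ) ^ 2) μ →
        gammaSq p ≤ ∫ ω, ((X ω : ℝ) - ∫ ω', (X ω' : ℝ) ∂μ) ^ 2 ∂μ := by
  refine ⟨gammaSq_le_one_div_four hp hsum, fun Ω _ μ _ X hX hlaw hX1 hX2 => ?_⟩
  set m := ∫ ω, (X ω : ℝ) ∂μ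
  have hint : Integrable (fun ω => ((X ω : ℝ) - m) ^ 2) μ := by
    have hmem : MemLp (fun ω => (X ω : ℝ)) 2 μ := (memLp_two_iff_integrable_sq hX1.1).2 hX2
    exact (hmem.sub (memLp_const m)).integrable_sq
  refine gammaSq_le_of_hasSum_mul_sq_sub hp (c := m) ?_
  simpa [measureReal_def, hlaw] using
    hasSum_integral_comp_of_nat hX (g := fun n : ℕ => ((n : ℝ) - m) ^ 2) hint
end

section
/- Let 0 < r ≤ 1 and let X_1, …, X_n be independent ℕ-valued random variables with means m_k, standard deviations σ_k and finite (2+r)-th centered moments. Set σ² = Σ_k Var X_k, β = Σ_k E|X_k − m_k|^{2+r}, δ = (σ²/(2β))^{1/r}, and let φ_k(θ) = E[e^{iθ(X_k − m_k)}]. If σ > 0 and max_k σ_k ≤ σ/2, then for every θ with |θ| ≤ δ, |Π_{k=1}^n φ_k(θ) − exp(−σ²θ²/2)| ≤ β·|θ|^{2+r}·exp(−σ²θ²/8). -/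
/-!
Write `φₖ = 1 - aₖ + Rₖ` with `aₖ = θ²σₖ²/2`. The Taylor bound
`|e^{ix} - 1 - ix + x²/2| ≤ (3/5)|x|^{2+r}` gives `|Rₖ| ≤ (3/5)eₖ` with
`eₖ = |θ|^{2+r} E|Xₖ - mₖ|^{2+r}`, and Lyapunov's inequality `(2aₖ)^{1+r/2} ≤ eₖ` is all that
links `aₖ` and `eₖ`. From these, `|φₖ| ≤ exp(-aₖ + 3eₖ/5)` and
`|φₖ - e^{-aₖ}| ≤ eₖ exp(-2aₖ/5 + 3eₖ/5)`, so telescoping the difference of the products gives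
`|∏ φₖ - e^{-∑ a}| ≤ ∑ₖ eₖ exp(3aₖ/5 - ∑ a + (3/5)∑ e)`. The hypotheses `|θ| ≤ δ` and
`σₖ ≤ σ/2` say exactly `∑ e ≤ ∑ a` and `aₖ ≤ (∑ a)/4`, so the exponent is at most
`-(∑ a)/4 = -σ²θ²/8`.
-/

open MeasureTheory ProbabilityTheory

/-- Mean of an `ℕ`-valued random variable. -/
noncomputable def meanOf {Ω : Type*} [MeasurableSpace Ω] (μ : Measure Ω) (X : Ω → ℕ) : ℝ :=
  ∫ ω, (X ω : ℝ) ∂μ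

/-- Centered absolute moment of order `p` of an `ℕ`-valued random variable. -/
noncomputable def cmom {Ω : Type*} [MeasurableSpace Ω] (μ : Measure Ω) (X : Ω → ℕ)
    (p : ℝ) : ℝ :=
  ∫ ω, |(X ω : ℝ) - meanOf μ X| ^ p ∂μ

open Real

namespace Real
variable {x : ℝ}

lemma le_of_deriv_nonneg_of_nonneg {f : ℝ → ℝ} (hf : Differentiable ℝ f)
    (hf' : ∀ t, 0 < t → 0 ≤ deriv f t) (hx : 0 ≤ x) : f 0 ≤ f x :=
  monotoneOn_of_deriv_nonneg (convex_Ici 0) hf.continuous.continuousOn hf.differentiableOn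
    (by simpa using hf') Set.self_mem_Ici hx hx

theorem cos_le_one_sub_sq_div_two_add_quartic (hx : 0 ≤ x) :
    cos x ≤ 1 - x ^ 2 / 2 + x ^ 4 / 24 := by
  have := le_of_deriv_nonneg_of_nonneg (f := fun t => 1 - t ^ 2 / 2 + t ^ 4 / 24 - cos t)
    (by fun_prop) (fun t ht => by
      simp (disch := fun_prop)
      linarith [sin_ge_sub_cube ht.le]) hx
  simpa using this

theorem exp_neg_le_one_sub_add_sq_div_two (hx : 0 ≤ x) : exp (-x) ≤ 1 - x + x ^ 2 / 2 := by
  have := le_of_deriv_nonneg_of_nonneg (f := fun t => 1 - t + t ^ 2 / 2 - exp (-t))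
    (by fun_prop) (fun t _ => by
      simp (disch := fun_prop)
      linarith [add_one_le_exp (-t)]) hx
  simpa using this

theorem one_sub_add_sq_div_two_sub_cube_div_six_le_exp_neg (hx : 0 ≤ x) :
    1 - x + x ^ 2 / 2 - x ^ 3 / 6 ≤ exp (-x) := by
  have := le_of_deriv_nonneg_of_nonneg (f := fun t => exp (-t) - (1 - t + t ^ 2 / 2 - t ^ 3 / 6))
    (by fun_prop) (fun t ht => by
      simp (disch := fun_prop)
      linarith [exp_neg_le_one_sub_add_sq_div_two ht.le]) hx
  simpa using this

end Real

noncomputable def expMulIRem (x : ℝ) : ℂ :=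
  Complex.exp (x * Complex.I) - 1 - x * Complex.I + x ^ 2 / 2

section ExpMulIRem

variable {x : ℝ}

lemma expMulIRem_re (x : ℝ) : (expMulIRem x).re = cos x - 1 + x ^ 2 / 2 := by
  simp [expMulIRem, Complex.exp_ofReal_mul_I_re, ← Complex.ofReal_pow]

lemma expMulIRem_im (x : ℝ) : (expMulIRem x).im = sin x - x := by
  simp [expMulIRem, Complex.exp_ofReal_mul_I_im, ← Complex.ofReal_pow]

lemma expMulIRem_neg (x : ℝ) : expMulIRem (-x) = (starRingEnd ℂ) (expMulIRem x) := by
  apply Complex.ext <;> simp [expMulIRem_re, expMulIRem_im]; ring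

lemma norm_expMulIRem_le_of_nonneg (hx : 0 ≤ x) : ‖expMulIRem x‖ ≤ x ^ 4 / 24 + x ^ 3 / 6 := by
  have hre : |(expMulIRem x).re| ≤ x ^ 4 / 24 := by
    rw [expMulIRem_re, abs_le]
    constructor <;> nlinarith [one_sub_sq_div_two_le_cos (x := x),
      cos_le_one_sub_sq_div_two_add_quartic hx, pow_nonneg hx 4]
  have him : |(expMulIRem x).im| ≤ x ^ 3 / 6 := by
    rw [expMulIRem_im, abs_le]
    constructor <;> linarith [sin_le hx, sin_ge_sub_cube hx]
  linarith [Complex.norm_le_abs_re_add_abs_im (expMulIRem x)]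

lemma sq_norm_expMulIRem (x : ℝ) :
    ‖expMulIRem x‖ ^ 2 = 2 - 2 * cos x + x ^ 2 * cos x - 2 * x * sin x + x ^ 4 / 4 := by
  rw [Complex.sq_norm, Complex.normSq_apply, expMulIRem_re, expMulIRem_im]
  linear_combination sin_sq_add_cos_sq x

lemma norm_expMulIRem_le_sq_of_le (hx : 11 / 5 ≤ x) : ‖expMulIRem x‖ ≤ 3 / 5 * x ^ 2 := by
  have hπ := pi_gt_d2
  have hπ' := pi_lt_d2
  have hx2 : 2 ≤ x ^ 2 := by nlinarith
  have key : 2 - 2 * cos x + x ^ 2 * cos x - 2 * x * sin x ≤ 11 / 100 * x ^ 4 := by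
    rcases le_total x π with hxπ | hπx
    · have hcos : cos x ≤ 0 := cos_nonpos_of_pi_div_two_le_of_le (by linarith) (by linarith)
      have hsin := sin_nonneg_of_nonneg_of_le_pi (by linarith) hxπ
      have hx4 : (11 / 5) ^ 4 ≤ x ^ 4 := pow_le_pow_left₀ (by norm_num) hx 4
      nlinarith [mul_nonneg (neg_nonneg.2 hcos) (sub_nonneg.2 hx2),
        mul_nonneg (by linarith : 0 ≤ x) hsin]
    rcases le_total x (π + π / 2) with hx3 | hx3
    · have hcos := cos_nonpos_of_pi_div_two_le_of_le (by linarith) hx3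
      have hx3 : (157 / 50) ^ 3 ≤ x ^ 3 := pow_le_pow_left₀ (by norm_num) (by linarith) 3
      have hx4 : 30 * x ≤ x ^ 4 := by nlinarith
      nlinarith [mul_nonneg (neg_nonneg.2 hcos) (sub_nonneg.2 hx2),
        mul_nonneg (by linarith : 0 ≤ x) (by linarith [neg_one_le_sin x] : 0 ≤ sin x + 1)]
    · have hx2' : 47 / 10 * x ≤ x ^ 2 := by nlinarith
      have hx4 : 22 * x ^ 2 ≤ x ^ 4 := by nlinarith
      nlinarith [mul_nonneg (by linarith [cos_le_one x] : 0 ≤ 1 - cos x) (sub_nonneg.2 hx2),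
        mul_nonneg (by linarith : 0 ≤ x) (by linarith [neg_one_le_sin x] : 0 ≤ sin x + 1)]
  rw [← pow_le_pow_iff_left₀ (norm_nonneg _) (by positivity) two_ne_zero, sq_norm_expMulIRem]
  nlinarith

lemma norm_expMulIRem_le {r : ℝ} (hr0 : 0 ≤ r) (hr1 : r ≤ 1) (x : ℝ) :
    ‖expMulIRem x‖ ≤ 3 / 5 * |x| ^ (2 + r) := by
  wlog hx : 0 ≤ x generalizing x
  · simpa [expMulIRem_neg] using this (-x) (by linarith)
  rw [abs_of_nonneg hx]
  rcases le_total x 1 with hx1 | hx1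
  · have h3 : x ^ (3 : ℝ) ≤ x ^ (2 + r) :=
      rpow_le_rpow_of_exponent_ge' hx hx1 (by linarith) (by linarith)
    rw [rpow_ofNat] at h3
    have h4 : x ^ 4 ≤ x ^ 3 := pow_le_pow_of_le_one hx hx1 (by norm_num)
    linarith [norm_expMulIRem_le_of_nonneg hx, pow_nonneg hx 3]
  have h2 : x ^ (2 : ℝ) ≤ x ^ (2 + r) := rpow_le_rpow_of_exponent_le hx1 (by linarith)
  rw [rpow_ofNat] at h2
  rcases le_total x (11 / 5) with hx2 | hx2
  · have hq : x ^ 2 / 24 + x / 6 ≤ 3 / 5 := by nlinarith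
    nlinarith [norm_expMulIRem_le_of_nonneg hx, mul_le_mul_of_nonneg_left hq (sq_nonneg x)]
  · linarith [norm_expMulIRem_le_sq_of_le hx2]

end ExpMulIRem

lemma sq_le_mul_max_one_of_rpow_le {t e p : ℝ} (ht : 0 ≤ t) (hp1 : 1 ≤ p) (hp2 : p ≤ 2)
    (h : t ^ p ≤ e) : t ^ 2 ≤ e * max 1 t := by
  rcases le_total t 1 with ht1 | ht1
  · have he : 0 ≤ e := (rpow_nonneg ht p).trans h
    calc t ^ 2 = t ^ (2 : ℝ) := (rpow_ofNat t 2).symm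
      _ ≤ t ^ p := rpow_le_rpow_of_exponent_ge' ht ht1 (by linarith) hp2
      _ ≤ e := h
      _ ≤ e * max 1 t := le_mul_of_one_le_right he (le_max_left 1 t)
  · calc t ^ 2 = t ^ p * t ^ (2 - p) := by
          rw [← rpow_add' ht (by norm_num), add_sub_cancel, rpow_ofNat]
      _ ≤ e * t := by
          gcongr
          · exact (rpow_nonneg ht p).trans h
          · simpa using rpow_le_rpow_of_exponent_le ht1 (show 2 - p ≤ 1 by linarith)
      _ = e * max 1 t := by rw [max_eq_right ht1]

lemma norm_le_exp_of_norm_sub_one_add_le {φ : ℂ} {a e : ℝ}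
    (hL : (2 * a) ^ 2 ≤ e * max 1 (2 * a)) (hφ1 : ‖φ‖ ≤ 1) (hφ : ‖φ - 1 + a‖ ≤ 3 / 5 * e) :
    ‖φ‖ ≤ exp (-a + 3 / 5 * e) := by
  rcases le_or_gt a 1 with ha | ha
  · have h1a : ‖(1 - a : ℂ)‖ = 1 - a := by
      rw [← Complex.ofReal_one, ← Complex.ofReal_sub, Complex.norm_real,
        norm_of_nonneg (by linarith)]
    calc ‖φ‖ = ‖(φ - 1 + a) + (1 - a : ℂ)‖ := by ring_nf
      _ ≤ 3 / 5 * e + (1 - a) := (norm_add_le _ _).trans (by rw [h1a]; linarith)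
      _ ≤ exp (-a + 3 / 5 * e) := by linarith [add_one_le_exp (-a + 3 / 5 * e)]
  · have he : 2 * a ≤ e := by
      rw [max_eq_right (by linarith)] at hL
      nlinarith
    exact hφ1.trans (one_le_exp (by linarith))

lemma three_fifths_add_max_div_eight_le_exp {a : ℝ} (ha : 0 ≤ a) (ha' : a ≤ 13 / 20) :
    3 / 5 + max 1 (2 * a) / 8 ≤ exp (-(2 / 5) * a) := by
  rw [neg_mul]
  rcases le_total (2 * a) 1 with h | h
  · rw [max_eq_left h]
    linarith [add_one_le_exp (-(2 / 5 * a))]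
  · rw [max_eq_right h]
    nlinarith [one_sub_add_sq_div_two_sub_cube_div_six_le_exp_neg (show 0 ≤ 2 / 5 * a by linarith)]

lemma norm_sub_exp_neg_le {φ : ℂ} {a e : ℝ} (ha : 0 ≤ a)
    (hL : (2 * a) ^ 2 ≤ e * max 1 (2 * a)) (hφ1 : ‖φ‖ ≤ 1) (hφ : ‖φ - 1 + a‖ ≤ 3 / 5 * e) :
    ‖φ - exp (-a)‖ ≤ e * exp (-(2 / 5) * a + 3 / 5 * e) := by
  have he : 0 ≤ e := nonneg_of_mul_nonneg_left ((sq_nonneg _).trans hL) (by positivity)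
  rcases le_or_gt a (13 / 20) with ha' | ha'
  · have hexp : ‖((exp (-a) - 1 + a : ℝ) : ℂ)‖ ≤ a ^ 2 / 2 := by
      rw [Complex.norm_real, norm_of_nonneg (by linarith [add_one_le_exp (-a)])]
      linarith [exp_neg_le_one_sub_add_sq_div_two ha]
    calc ‖φ - exp (-a)‖ = ‖(φ - 1 + a) - ((exp (-a) - 1 + a : ℝ) : ℂ)‖ := by push_cast; ring_nf
      _ ≤ 3 / 5 * e + a ^ 2 / 2 := (norm_sub_le _ _).trans (add_le_add hφ hexp)
      _ ≤ e * (3 / 5 + max 1 (2 * a) / 8) := by nlinarith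
      _ ≤ e * exp (-(2 / 5) * a) := by gcongr; exact three_fifths_add_max_div_eight_le_exp ha ha'
      _ ≤ e * exp (-(2 / 5) * a + 3 / 5 * e) := by gcongr; linarith
  · have h2a : 2 * a ≤ e := by
      rw [max_eq_right (by linarith)] at hL
      nlinarith
    have hexp_a : exp (-a) * (1 + a) ≤ 1 := by
      calc exp (-a) * (1 + a) ≤ exp (-a) * exp a := by gcongr; linarith [add_one_le_exp a]
        _ = 1 := by rw [← exp_add, neg_add_cancel, exp_zero]
    have hexp_4a : 1 + 4 / 5 * a ≤ exp (4 / 5 * a) := by linarith [add_one_le_exp (4 / 5 * a)]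
    calc ‖φ - exp (-a)‖ ≤ 1 + exp (-a) := by
          refine (norm_sub_le _ _).trans ?_
          rw [Complex.norm_real, norm_of_nonneg (exp_pos _).le]
          linarith
      _ ≤ 2 * a * exp (4 / 5 * a) := by nlinarith [exp_pos (-a)]
      _ ≤ e * exp (-(2 / 5) * a + 3 / 5 * e) := by gcongr; linarith

theorem Finset.norm_prod_sub_prod_le {ι R : Type*} [NormedCommRing R] [NormOneClass R]
    [DecidableEq ι] (s : Finset ι) {f g : ι → R} {M : ι → ℝ}
    (hf : ∀ i ∈ s, ‖f i‖ ≤ M i) (hg : ∀ i ∈ s, ‖g i‖ ≤ M i) :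
    ‖∏ i ∈ s, f i - ∏ i ∈ s, g i‖ ≤ ∑ i ∈ s, ‖f i - g i‖ * ∏ j ∈ s.erase i, M j := by
  induction s using Finset.induction_on with
  | empty => simp
  | @insert a t ha ih =>
    simp only [Finset.forall_mem_insert] at hf hg
    have hM : 0 ≤ M a := (norm_nonneg _).trans hf.1
    have hgt : ‖∏ i ∈ t, g i‖ ≤ ∏ i ∈ t, M i :=
      (Finset.norm_prod_le _ _).trans (Finset.prod_le_prod (fun _ _ => norm_nonneg _) hg.2)
    have hsplit : ∏ i ∈ insert a t, f i - ∏ i ∈ insert a t, g i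
        = (f a - g a) * ∏ i ∈ t, g i + f a * (∏ i ∈ t, f i - ∏ i ∈ t, g i) := by
      rw [Finset.prod_insert ha, Finset.prod_insert ha]; ring
    have herase : ∀ i ∈ t, M a * ∏ j ∈ t.erase i, M j = ∏ j ∈ (insert a t).erase i, M j := by
      intro i hi
      rw [Finset.erase_insert_of_ne (ne_of_mem_of_not_mem hi ha).symm,
        Finset.prod_insert (fun h => ha (Finset.mem_of_mem_erase h))]
    rw [hsplit, Finset.sum_insert ha, Finset.erase_insert ha]
    refine (norm_add_le _ _).trans (add_le_add ?_ ?_)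
    · exact (norm_mul_le _ _).trans (mul_le_mul_of_nonneg_left hgt (norm_nonneg _))
    · calc ‖f a * (∏ i ∈ t, f i - ∏ i ∈ t, g i)‖
          ≤ M a * ∑ i ∈ t, ‖f i - g i‖ * ∏ j ∈ t.erase i, M j :=
            (norm_mul_le _ _).trans (mul_le_mul hf.1 (ih hf.2 hg.2) (norm_nonneg _) hM)
        _ = ∑ i ∈ t, ‖f i - g i‖ * ∏ j ∈ (insert a t).erase i, M j := by
            rw [Finset.mul_sum]
            refine Finset.sum_congr rfl fun i hi => ?_
            rw [← herase i hi]; ring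

theorem norm_prod_sub_exp_neg_sum_le {ι : Type*} [Fintype ι] {φ : ι → ℂ} {a e : ι → ℝ}
    (ha : ∀ i, 0 ≤ a i) (hL : ∀ i, (2 * a i) ^ 2 ≤ e i * max 1 (2 * a i))
    (hφ1 : ∀ i, ‖φ i‖ ≤ 1) (hφ : ∀ i, ‖φ i - 1 + a i‖ ≤ 3 / 5 * e i)
    (hmax : ∀ i, a i ≤ (∑ j, a j) / 4) (hsum : ∑ i, e i ≤ ∑ i, a i) :
    ‖∏ i, φ i - exp (-∑ i, a i)‖ ≤ (∑ i, e i) * exp (-(∑ i, a i) / 4) := by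
  classical
  set M : ι → ℝ := fun i => exp (-a i + 3 / 5 * e i)
  have he : ∀ i, 0 ≤ e i := fun i =>
    nonneg_of_mul_nonneg_left ((sq_nonneg _).trans (hL i)) (by positivity)
  have hgauss : ∏ i, ((exp (-a i) : ℝ) : ℂ) = exp (-∑ i, a i) := by
    rw [← Complex.ofReal_prod, ← exp_sum, Finset.sum_neg_distrib]
  have hM : ∀ i, ‖((exp (-a i) : ℝ) : ℂ)‖ ≤ M i := fun i => by
    rw [Complex.norm_real, norm_of_nonneg (exp_pos _).le]
    exact exp_le_exp.2 (by linarith [he i])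
  have hexponent : ∑ j, (-a j + 3 / 5 * e j) = -∑ j, a j + 3 / 5 * ∑ j, e j := by
    rw [Finset.sum_add_distrib, Finset.sum_neg_distrib, Finset.mul_sum]
  rw [← hgauss, Finset.sum_mul]
  refine (Finset.univ.norm_prod_sub_prod_le (M := M)
    (fun i _ => norm_le_exp_of_norm_sub_one_add_le (hL i) (hφ1 i) (hφ i)) (fun i _ => hM i)).trans
    (Finset.sum_le_sum fun i _ => ?_)
  have hsplit := Finset.add_sum_erase Finset.univ (fun j => -a j + 3 / 5 * e j) (Finset.mem_univ i)
  calc ‖φ i - ((exp (-a i) : ℝ) : ℂ)‖ * ∏ j ∈ Finset.univ.erase i, M j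
      ≤ e i * exp (-(2 / 5) * a i + 3 / 5 * e i)
          * exp (∑ j ∈ Finset.univ.erase i, (-a j + 3 / 5 * e j)) := by
        rw [exp_sum]
        gcongr
        exact norm_sub_exp_neg_le (ha i) (hL i) (hφ1 i) (hφ i)
    _ = e i * exp (3 / 5 * a i + ∑ j, (-a j + 3 / 5 * e j)) := by
        rw [mul_assoc, ← exp_add, ← hsplit]; ring_nf
    _ ≤ e i * exp (-(∑ i, a i) / 4) := by
        gcongr
        · exact he i
        · rw [hexponent]; linarith [hmax i]

section Moments

variable {Ω : Type*} [MeasurableSpace Ω] {μ : Measure Ω} [IsProbabilityMeasure μ] {Y : Ω → ℝ}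

lemma integral_sq_rpow_le_integral_abs_rpow {p : ℝ} (hp : 2 ≤ p)
    (hY2 : Integrable (fun ω => Y ω ^ 2) μ) (hYp : Integrable (fun ω => |Y ω| ^ p) μ) :
    (∫ ω, Y ω ^ 2 ∂μ) ^ (p / 2) ≤ ∫ ω, |Y ω| ^ p ∂μ := by
  have hpow : ∀ y : ℝ, (y ^ 2) ^ (p / 2) = |y| ^ p := fun y => by
    rw [← sq_abs, ← rpow_ofNat, ← rpow_mul (abs_nonneg y)]; ring_nf
  have hconv : ConvexOn ℝ (Set.Ici 0) fun t : ℝ => t ^ (p / 2) := convexOn_rpow (by linarith)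
  have hcont : ContinuousOn (fun t : ℝ => t ^ (p / 2)) (Set.Ici 0) :=
    continuousOn_id.rpow_const fun _ _ => Or.inr (by linarith)
  simpa only [Function.comp_def, hpow] using hconv.map_integral_le hcont isClosed_Ici
    (ae_of_all _ fun ω => sq_nonneg (Y ω)) hY2 (by simpa only [Function.comp_def, hpow] using hYp)

lemma norm_integral_exp_mul_I_le_one (θ : ℝ) :
    ‖∫ ω, Complex.exp (θ * Y ω * Complex.I) ∂μ‖ ≤ 1 := by
  simpa using norm_integral_le_of_norm_le_const (μ := μ) (C := 1) (ae_of_all _ fun ω => by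
    rw [← Complex.ofReal_mul, Complex.norm_exp_ofReal_mul_I])

lemma norm_integral_exp_mul_I_sub_one_add_le {r : ℝ} (hr0 : 0 ≤ r) (hr1 : r ≤ 1)
    (hY : Integrable Y μ) (hY0 : ∫ ω, Y ω ∂μ = 0) (hY2 : Integrable (fun ω => Y ω ^ 2) μ)
    (hYr : Integrable (fun ω => |Y ω| ^ (2 + r)) μ) (θ : ℝ) :
    ‖(∫ ω, Complex.exp (θ * Y ω * Complex.I) ∂μ) - 1 + ((θ ^ 2 * (∫ ω, Y ω ^ 2 ∂μ) / 2 : ℝ) : ℂ)‖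
      ≤ 3 / 5 * (|θ| ^ (2 + r) * ∫ ω, |Y ω| ^ (2 + r) ∂μ) := by
  have hexp : Integrable (fun ω => Complex.exp (θ * Y ω * Complex.I)) μ :=
    .of_bound (by fun_prop) 1 (ae_of_all _ fun ω => by
      rw [← Complex.ofReal_mul, Complex.norm_exp_ofReal_mul_I])
  have hlin : Integrable (fun ω => ((θ * Y ω : ℝ) : ℂ) * Complex.I) μ :=
    ((hY.const_mul θ).ofReal).mul_const _
  have hquad : Integrable (fun ω => ((θ ^ 2 / 2 * Y ω ^ 2 : ℝ) : ℂ)) μ :=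
    (hY2.const_mul _).ofReal
  have hrem : ∫ ω, expMulIRem (θ * Y ω) ∂μ
      = (∫ ω, Complex.exp (θ * Y ω * Complex.I) ∂μ) - 1
        + ((θ ^ 2 * (∫ ω, Y ω ^ 2 ∂μ) / 2 : ℝ) : ℂ) := by
    have hpt : ∀ ω, expMulIRem (θ * Y ω) = Complex.exp (θ * Y ω * Complex.I) - 1
        - ((θ * Y ω : ℝ) : ℂ) * Complex.I + ((θ ^ 2 / 2 * Y ω ^ 2 : ℝ) : ℂ) := fun ω => by
      simp only [expMulIRem]; push_cast; ring
    have hexp1 : Integrable (fun ω => Complex.exp (θ * Y ω * Complex.I) - 1) μ :=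
      hexp.sub (integrable_const 1)
    have hexp1lin : Integrable (fun ω => Complex.exp (θ * Y ω * Complex.I) - 1
        - ((θ * Y ω : ℝ) : ℂ) * Complex.I) μ := hexp1.sub hlin
    simp_rw [hpt]
    rw [integral_add hexp1lin hquad, integral_sub hexp1 hlin,
      integral_sub hexp (integrable_const 1), integral_mul_const, integral_complex_ofReal,
      integral_complex_ofReal, integral_const_mul, integral_const_mul, hY0]
    simp only [integral_const, probReal_univ, one_smul]
    push_cast; ring
  rw [← hrem, ← integral_const_mul, ← integral_const_mul]
  refine norm_integral_le_of_norm_le ((hYr.const_mul _).const_mul _) (ae_of_all _ fun ω => ?_)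
  calc ‖expMulIRem (θ * Y ω)‖ ≤ 3 / 5 * |θ * Y ω| ^ (2 + r) := norm_expMulIRem_le hr0 hr1 _
    _ = 3 / 5 * (|θ| ^ (2 + r) * |Y ω| ^ (2 + r)) := by
      rw [abs_mul, mul_rpow (abs_nonneg _) (abs_nonneg _)]

lemma sq_mul_integral_sq_le {r : ℝ} (hr0 : 0 ≤ r) (hr1 : r ≤ 2)
    (hY2 : Integrable (fun ω => Y ω ^ 2) μ) (hYr : Integrable (fun ω => |Y ω| ^ (2 + r)) μ)
    (θ : ℝ) :
    (θ ^ 2 * ∫ ω, Y ω ^ 2 ∂μ) ^ 2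
      ≤ (|θ| ^ (2 + r) * ∫ ω, |Y ω| ^ (2 + r) ∂μ) * max 1 (θ ^ 2 * ∫ ω, Y ω ^ 2 ∂μ) := by
  have hv : 0 ≤ ∫ ω, Y ω ^ 2 ∂μ := integral_nonneg fun ω => sq_nonneg (Y ω)
  refine sq_le_mul_max_one_of_rpow_le (p := (2 + r) / 2) (by positivity) (by linarith)
    (by linarith) ?_
  rw [mul_rpow (sq_nonneg θ) hv, ← sq_abs θ, ← rpow_ofNat, ← rpow_mul (abs_nonneg θ)]
  have := integral_sq_rpow_le_integral_abs_rpow (by linarith) hY2 hYr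
  rw [show (2 : ℝ) * ((2 + r) / 2) = 2 + r by ring]
  gcongr

end Moments

lemma integral_sub_meanOf {Ω : Type*} [MeasurableSpace Ω] {μ : Measure Ω} [IsProbabilityMeasure μ]
    {X : Ω → ℕ} (hX : Integrable (fun ω => (X ω : ℝ)) μ) :
    ∫ ω, ((X ω : ℝ) - meanOf μ X) ∂μ = 0 := by
  rw [integral_sub hX (integrable_const _), integral_const, probReal_univ, one_smul, meanOf,
    sub_self]

lemma cmom_two {Ω : Type*} [MeasurableSpace Ω] (μ : Measure Ω) (X : Ω → ℕ) :
    cmom μ X 2 = ∫ ω, ((X ω : ℝ) - meanOf μ X) ^ 2 ∂μ := by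
  simp only [cmom, rpow_two, sq_abs]

lemma mul_rpow_two_add_le_of_abs_le {r s β θ : ℝ} (hr : 0 < r) (hs : 0 ≤ s) (hβ : 0 ≤ β)
    (hθ : |θ| ≤ (s / (2 * β)) ^ (1 / r)) : β * |θ| ^ (2 + r) ≤ s * θ ^ 2 / 2 := by
  rcases hβ.eq_or_lt with rfl | hβ
  · simp only [zero_mul]; positivity
  have hθr : |θ| ^ r ≤ s / (2 * β) := by
    calc |θ| ^ r ≤ ((s / (2 * β)) ^ (1 / r)) ^ r := by gcongr
      _ = s / (2 * β) := by rw [← rpow_mul (by positivity), one_div_mul_cancel hr.ne', rpow_one]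
  rw [rpow_add' (abs_nonneg θ) (by linarith), rpow_ofNat, sq_abs]
  calc β * (θ ^ 2 * |θ| ^ r) ≤ β * (θ ^ 2 * (s / (2 * β))) := by gcongr
    _ = s * θ ^ 2 / 2 := by field_simp

theorem stmt14_general (r : ℝ) (hr0 : 0 < r) (hr1 : r ≤ 1)
    (Ω : Type) (mΩ : MeasurableSpace Ω) (μ : Measure Ω)
    (hprob : IsProbabilityMeasure μ)
    (n : ℕ) (X : Fin n → Ω → ℕ)
    (hint1 : ∀ k, Integrable (fun ω => ((X k ω : ℝ))) μ)
    (hint2 : ∀ k, Integrable (fun ω => ((X k ω : ℝ) - meanOf μ (X k)) ^ 2) μ)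
    (hintr : ∀ k, Integrable (fun ω => |(X k ω : ℝ) - meanOf μ (X k)| ^ (2 + r)) μ)
    (σ β δ : ℝ)
    (hσ : σ = Real.sqrt (∑ k, cmom μ (X k) 2))
    (hβ : β = ∑ k, cmom μ (X k) (2 + r))
    (hδ : δ = (σ ^ 2 / (2 * β)) ^ (1 / r))
    (hmax : ∀ k, Real.sqrt (cmom μ (X k) 2) ≤ σ / 2) :
    ∀ θ : ℝ, |θ| ≤ δ →
      ‖((∏ k, ∫ ω, Complex.exp (θ * ((X k ω : ℝ) - meanOf μ (X k)) * Complex.I) ∂μ)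
          - Real.exp (-σ ^ 2 * θ ^ 2 / 2))‖
        ≤ β * |θ| ^ (2 + r) * Real.exp (-σ ^ 2 * θ ^ 2 / 8) := by
  intro θ hθ
  have hv : ∀ k, 0 ≤ cmom μ (X k) 2 := fun k => integral_nonneg fun ω => by positivity
  have hσ2 : σ ^ 2 = ∑ k, cmom μ (X k) 2 := by rw [hσ, sq_sqrt (Finset.sum_nonneg fun k _ => hv k)]
  have hβ0 : 0 ≤ β := hβ ▸ Finset.sum_nonneg fun k _ => integral_nonneg fun ω => by positivity
  set a : Fin n → ℝ := fun k => θ ^ 2 * cmom μ (X k) 2 / 2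
  set e : Fin n → ℝ := fun k => |θ| ^ (2 + r) * cmom μ (X k) (2 + r)
  have hsum_a : ∑ k, a k = σ ^ 2 * θ ^ 2 / 2 := by
    simp only [a, hσ2, Finset.sum_mul, Finset.sum_div]
    exact Finset.sum_congr rfl fun k _ => by ring
  have hsum_e : ∑ k, e k = β * |θ| ^ (2 + r) := by
    rw [hβ, Finset.sum_mul]
    exact Finset.sum_congr rfl fun k _ => mul_comm _ _
  rw [show -σ ^ 2 * θ ^ 2 / 2 = -∑ k, a k by rw [hsum_a]; ring,
    show -σ ^ 2 * θ ^ 2 / 8 = -(∑ k, a k) / 4 by rw [hsum_a]; ring, ← hsum_e]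
  refine norm_prod_sub_exp_neg_sum_le (fun k => by have := hv k; positivity) (fun k => ?_)
    (fun k => ?_) (fun k => ?_) (fun k => ?_) ?_
  · have := sq_mul_integral_sq_le hr0.le (by linarith) (hint2 k) (hintr k) θ
    rw [← cmom_two] at this
    rwa [show 2 * a k = θ ^ 2 * cmom μ (X k) 2 by simp only [a]; ring]
  · simpa only [Complex.ofReal_sub] using norm_integral_exp_mul_I_le_one (μ := μ)
      (Y := fun ω => (X k ω : ℝ) - meanOf μ (X k)) θ
  · have := norm_integral_exp_mul_I_sub_one_add_le (Y := fun ω => (X k ω : ℝ) - meanOf μ (X k))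
      hr0.le hr1 ((hint1 k).sub (integrable_const _))
      (integral_sub_meanOf (hint1 k)) (hint2 k) (hintr k) θ
    simp only [Complex.ofReal_sub, ← cmom_two] at this
    exact this
  · have := (sqrt_le_iff.1 (hmax k)).2
    rw [hsum_a]
    simp only [a]
    nlinarith [sq_nonneg θ]
  · rw [hsum_a, hsum_e]
    exact mul_rpow_two_add_le_of_abs_le hr0 (sq_nonneg σ) hβ0 (hθ.trans_eq hδ)

theorem stmt14 (r : ℝ) (hr0 : 0 < r) (hr1 : r ≤ 1)
    (Ω : Type) (mΩ : MeasurableSpace Ω) (μ : Measure Ω)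
    (hprob : IsProbabilityMeasure μ)
    (n : ℕ) (X : Fin n → Ω → ℕ)
    (hmeas : ∀ k, Measurable (X k))
    (hind : iIndepFun X μ)
    (hint1 : ∀ k, Integrable (fun ω => ((X k ω : ℝ))) μ)
    (hint2 : ∀ k, Integrable (fun ω => ((X k ω : ℝ) - meanOf μ (X k)) ^ 2) μ)
    (hintr : ∀ k, Integrable (fun ω => |(X k ω : ℝ) - meanOf μ (X k)| ^ (2 + r)) μ)
    (σ β δ : ℝ)
    (hσ : σ = Real.sqrt (∑ k, cmom μ (X k) 2))
    (hβ : β = ∑ k, cmom μ (X k) (2 + r))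
    (hδ : δ = (σ ^ 2 / (2 * β)) ^ (1 / r))
    (hσpos : 0 < σ)
    (hmax : ∀ k, Real.sqrt (cmom μ (X k) 2) ≤ σ / 2) :
    ∀ θ : ℝ, |θ| ≤ δ →
      ‖((∏ k, ∫ ω, Complex.exp (θ * ((X k ω : ℝ) - meanOf μ (X k)) * Complex.I) ∂μ)
          - Real.exp (-σ ^ 2 * θ ^ 2 / 2))‖
        ≤ β * |θ| ^ (2 + r) * Real.exp (-σ ^ 2 * θ ^ 2 / 8) :=
  stmt14_general r hr0 hr1 Ω mΩ μ hprob n X hint1 hint2 hintr σ β δ hσ hβ hδ hmax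
end

section
/- Fix A ∈ (0,1), an integer r ≥ 1, and a sequence R(q) > 0 (q ≥ 1) such that Σ_{q≥1} q^r A^q/(R(1)⋯R(q)) < ∞ (as holds when liminf_{q→∞} (R(1)⋯R(q))^{1/q} = 1). Then there exist constants 0 < c ≤ C < ∞, depending only on A, r and R, with the following property: for any rates μ(q) > 0 and any μ > 0 with μ(q) ≥ R(q)·μ for all q ≥ 1, and any parameter z > 0 with z/μ ≤ A, the random variable X with the power-series distribution with rates μ(·) and parameter z satisfies c·z/μ(1) ≤ E X ≤ C·z/μ(1) and c·z/μ(1) ≤ E|X − E X|^r ≤ C·z/μ(1). -/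
/-- Normalizing constant `f(z)` of the power-series distribution with rates `μs (q)`,
`q ≥ 1` (the empty product is `1`). -/
noncomputable def psF (μs : ℕ → ℝ) (z : ℝ) : ℝ :=
  ∑' x : ℕ, z ^ x / ∏ p ∈ Finset.range x, μs (p + 1)

/-- Mean of the power-series distribution with rates `μs` and parameter `z`. -/
noncomputable def psMean (μs : ℕ → ℝ) (z : ℝ) : ℝ :=
  (∑' x : ℕ, (x : ℝ) * z ^ x / ∏ p ∈ Finset.range x, μs (p + 1)) / psF μs z

/-- Centered absolute moment of integer order `r` of the power-series distribution
with rates `μs` and parameter `z`. -/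
noncomputable def psAbsCMom (μs : ℕ → ℝ) (z : ℝ) (r : ℕ) : ℝ :=
  (∑' x : ℕ, |(x : ℝ) - psMean μs z| ^ r * z ^ x / ∏ p ∈ Finset.range x, μs (p + 1))
    / psF μs z


/-!
Write `w x = z ^ x / (μ(1)⋯μ(x))` and `t = z / μ(1)`, so that `w 0 = 1` and `w 1 = t`. Each
ratio `z / μ(q)` is at most `A / R(q)`, hence `w (n + 1) ≤ t · β n` with
`β n = A ^ n / (R(2)⋯R(n + 1))`, and `∑ (n + 1) ^ r β n =: B` is finite. So the normalizing
constant lies in `[1, 1 + t B]` and the unnormalized first moment in `[t, t B]`, which puts the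
mean between `t / (1 + T B)` and `t B`, where `T = A / R(1)` bounds `t`. For the `r`-th centered
absolute moment, the atom at `0` contributes `m ^ r` and the atom at `1` contributes
`|1 - m| ^ r t`; one of `m`, `|1 - m|` is at least `1 / 2`, which gives the lower bound, while
`|x - m| ≤ (1 + m) x` for `x ≥ 1` gives the upper bound.
-/

open Finset

noncomputable def psWeight (μs : ℕ → ℝ) (z : ℝ) (x : ℕ) : ℝ :=
  z ^ x / ∏ p ∈ range x, μs (p + 1)

noncomputable def weightedMean (w : ℕ → ℝ) : ℝ :=
  (∑' x : ℕ, (x : ℝ) * w x) / ∑' x : ℕ, w x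

noncomputable def weightedAbsCMom (w : ℕ → ℝ) (r : ℕ) : ℝ :=
  (∑' x : ℕ, |(x : ℝ) - weightedMean w| ^ r * w x) / ∑' x : ℕ, w x

theorem psMean_eq_weightedMean (μs : ℕ → ℝ) (z : ℝ) :
    psMean μs z = weightedMean (psWeight μs z) := by
  simp only [psMean, psF, weightedMean, psWeight, mul_div_assoc]

theorem psAbsCMom_eq_weightedAbsCMom (μs : ℕ → ℝ) (z : ℝ) (r : ℕ) :
    psAbsCMom μs z r = weightedAbsCMom (psWeight μs z) r := by
  simp only [psAbsCMom, psF, weightedAbsCMom, psMean_eq_weightedMean, psWeight,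
    mul_div_assoc]

theorem psWeight_eq_prod (μs : ℕ → ℝ) (z : ℝ) (x : ℕ) :
    psWeight μs z x = ∏ p ∈ range x, z / μs (p + 1) := by
  rw [psWeight, prod_div_distrib, prod_const, card_range]

theorem psWeight_zero (μs : ℕ → ℝ) (z : ℝ) : psWeight μs z 0 = 1 := by
  simp [psWeight]

theorem psWeight_succ (μs : ℕ → ℝ) (z : ℝ) (n : ℕ) :
    psWeight μs z (n + 1) = z / μs 1 * psWeight (fun q => μs (q + 1)) z n := by
  simp only [psWeight_eq_prod, prod_range_succ', zero_add, mul_comm]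

theorem psWeight_one (μs : ℕ → ℝ) (z : ℝ) : psWeight μs z 1 = z / μs 1 := by
  simp [psWeight_succ, psWeight_zero]

theorem psWeight_nonneg {μs : ℕ → ℝ} {z : ℝ} (hμs : ∀ q, 1 ≤ q → 0 < μs q) (hz : 0 ≤ z)
    (x : ℕ) : 0 ≤ psWeight μs z x :=
  div_nonneg (pow_nonneg hz x) (prod_nonneg fun p _ => (hμs (p + 1) (by omega)).le)

theorem psWeight_le_psWeight {μs ν : ℕ → ℝ} {z a : ℝ}
    (hnonneg : ∀ q, 1 ≤ q → 0 ≤ z / μs q) (hle : ∀ q, 1 ≤ q → z / μs q ≤ a / ν q)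
    (x : ℕ) :
    psWeight μs z x ≤ psWeight ν a x := by
  rw [psWeight_eq_prod, psWeight_eq_prod]
  exact prod_le_prod (fun p _ => hnonneg _ (by omega)) fun p _ => hle _ (by omega)

theorem div_le_div_of_mul_le {z a μ ρ ν : ℝ} (hz0 : 0 ≤ z) (hμ : 0 < μ) (hρ : 0 < ρ)
    (hz : z / μ ≤ a) (hν : ρ * μ ≤ ν) : z / ν ≤ a / ρ := by
  have hz' : z ≤ a * μ := (div_le_iff₀ hμ).1 hz
  calc z / ν ≤ a * μ / (ρ * μ) := div_le_div₀ (hz0.trans hz') hz' (mul_pos hρ hμ) hν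
    _ = a / ρ := mul_div_mul_right a ρ hμ.ne'

theorem summable_of_succ_le {f g : ℕ → ℝ} {K : ℝ} (hf : ∀ n, 0 ≤ f n) (hg : Summable g)
    (hfg : ∀ n, f (n + 1) ≤ K * g n) : Summable f :=
  (summable_nat_add_iff 1).1 <| (hg.mul_left K).of_nonneg_of_le (fun _ => hf _) hfg

theorem tsum_le_of_succ_le {f g : ℕ → ℝ} {K : ℝ} (hf : ∀ n, 0 ≤ f n) (hg : Summable g)
    (hfg : ∀ n, f (n + 1) ≤ K * g n) : ∑' n, f n ≤ f 0 + K * ∑' n, g n := by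
  have hfs := summable_of_succ_le hf hg hfg
  rw [hfs.tsum_eq_zero_add, ← tsum_mul_left]
  exact add_le_add le_rfl
    (Summable.tsum_le_tsum hfg ((summable_nat_add_iff 1).2 hfs) (hg.mul_left K))

structure TailDominated (w β : ℕ → ℝ) (r : ℕ) (t : ℝ) : Prop where
  nonneg : ∀ x, 0 ≤ w x
  zero : w 0 = 1
  one : w 1 = t
  succ_le : ∀ n, w (n + 1) ≤ t * β n
  pos : 0 < t
  summable_tail : Summable fun n : ℕ => ((n : ℝ) + 1) ^ r * β n

namespace TailDominated

variable {w β : ℕ → ℝ} {t T B : ℝ} {r : ℕ}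

theorem β_nonneg (h : TailDominated w β r t) (n : ℕ) : 0 ≤ β n :=
  nonneg_of_mul_nonneg_right ((h.nonneg _).trans (h.succ_le n)) h.pos

theorem succ_le_mul_pow_mul (h : TailDominated w β r t) (n : ℕ) :
    w (n + 1) ≤ t * (((n : ℝ) + 1) ^ r * β n) :=
  (h.succ_le n).trans <| mul_le_mul_of_nonneg_left (le_mul_of_one_le_left (h.β_nonneg n)
    (one_le_pow₀ (by linarith [n.cast_nonneg (α := ℝ)]))) h.pos.le

theorem summable (h : TailDominated w β r t) : Summable w :=
  summable_of_succ_le h.nonneg h.summable_tail h.succ_le_mul_pow_mul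

theorem tsum_le (h : TailDominated w β r t)
    (hB : ∑' n : ℕ, ((n : ℝ) + 1) ^ r * β n ≤ B) : ∑' x, w x ≤ 1 + t * B := by
  calc ∑' x, w x ≤ w 0 + t * ∑' n : ℕ, ((n : ℝ) + 1) ^ r * β n :=
        tsum_le_of_succ_le h.nonneg h.summable_tail h.succ_le_mul_pow_mul
    _ ≤ 1 + t * B := by
        rw [h.zero]; exact add_le_add le_rfl (mul_le_mul_of_nonneg_left hB h.pos.le)

theorem one_le_tsum (h : TailDominated w β r t) : 1 ≤ ∑' x, w x :=
  h.zero ▸ h.summable.le_tsum 0 fun j _ => h.nonneg j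

theorem natCast_mul_succ_le (h : TailDominated w β r t) (hr : 1 ≤ r) (n : ℕ) :
    ((n + 1 : ℕ) : ℝ) * w (n + 1) ≤ t * (((n : ℝ) + 1) ^ r * β n) := by
  have hn : (1 : ℝ) ≤ (n : ℝ) + 1 := by linarith [n.cast_nonneg (α := ℝ)]
  calc ((n + 1 : ℕ) : ℝ) * w (n + 1) ≤ ((n : ℝ) + 1) ^ r * (t * β n) := by
        push_cast
        exact mul_le_mul (le_self_pow₀ hn (by omega)) (h.succ_le n) (h.nonneg _) (by positivity)
    _ = t * (((n : ℝ) + 1) ^ r * β n) := by ring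

theorem summable_natCast_mul (h : TailDominated w β r t) (hr : 1 ≤ r) :
    Summable fun x : ℕ => (x : ℝ) * w x :=
  summable_of_succ_le (fun x => mul_nonneg x.cast_nonneg (h.nonneg x)) h.summable_tail
    (h.natCast_mul_succ_le hr)

theorem tsum_natCast_mul_le (h : TailDominated w β r t)
    (hB : ∑' n : ℕ, ((n : ℝ) + 1) ^ r * β n ≤ B) (hr : 1 ≤ r) :
    ∑' x : ℕ, (x : ℝ) * w x ≤ t * B := by
  calc ∑' x : ℕ, (x : ℝ) * w x ≤ 0 * w 0 + t * ∑' n : ℕ, ((n : ℝ) + 1) ^ r * β n := by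
        simpa using tsum_le_of_succ_le (fun x => mul_nonneg x.cast_nonneg (h.nonneg x))
          h.summable_tail (h.natCast_mul_succ_le hr)
    _ ≤ t * B := by rw [zero_mul, zero_add]; exact mul_le_mul_of_nonneg_left hB h.pos.le

theorem le_tsum_natCast_mul (h : TailDominated w β r t) (hr : 1 ≤ r) :
    t ≤ ∑' x : ℕ, (x : ℝ) * w x := by
  simpa [h.one] using (h.summable_natCast_mul hr).le_tsum 1
    fun x _ => mul_nonneg x.cast_nonneg (h.nonneg x)

theorem abs_sub_pow_mul_succ_le (h : TailDominated w β r t) (a : ℝ) (n : ℕ) :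
    |((n + 1 : ℕ) : ℝ) - a| ^ r * w (n + 1) ≤
      t * (1 + |a|) ^ r * (((n : ℝ) + 1) ^ r * β n) := by
  have hn : (0 : ℝ) ≤ n := n.cast_nonneg
  have hdist : |((n + 1 : ℕ) : ℝ) - a| ≤ (1 + |a|) * ((n : ℝ) + 1) := by
    calc |((n + 1 : ℕ) : ℝ) - a| ≤ |((n + 1 : ℕ) : ℝ)| + |a| := abs_sub _ _
      _ ≤ (1 + |a|) * ((n : ℝ) + 1) := by
          push_cast
          rw [abs_of_nonneg (by positivity)]
          nlinarith [abs_nonneg a]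
  calc |((n + 1 : ℕ) : ℝ) - a| ^ r * w (n + 1)
        ≤ ((1 + |a|) * ((n : ℝ) + 1)) ^ r * (t * β n) :=
        mul_le_mul (pow_le_pow_left₀ (abs_nonneg _) hdist r) (h.succ_le n) (h.nonneg _)
          (by positivity)
    _ = t * (1 + |a|) ^ r * (((n : ℝ) + 1) ^ r * β n) := by rw [mul_pow]; ring

theorem summable_abs_sub_pow_mul (h : TailDominated w β r t) (a : ℝ) :
    Summable fun x : ℕ => |(x : ℝ) - a| ^ r * w x :=
  summable_of_succ_le (fun x => mul_nonneg (by positivity) (h.nonneg x)) h.summable_tail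
    (h.abs_sub_pow_mul_succ_le a)

theorem tsum_abs_sub_pow_mul_le (h : TailDominated w β r t)
    (hB : ∑' n : ℕ, ((n : ℝ) + 1) ^ r * β n ≤ B) (a : ℝ) :
    ∑' x : ℕ, |(x : ℝ) - a| ^ r * w x ≤ |a| ^ r + t * (1 + |a|) ^ r * B := by
  calc ∑' x : ℕ, |(x : ℝ) - a| ^ r * w x
        ≤ |((0 : ℕ) : ℝ) - a| ^ r * w 0 +
            t * (1 + |a|) ^ r * ∑' n : ℕ, ((n : ℝ) + 1) ^ r * β n :=
        tsum_le_of_succ_le (fun x => mul_nonneg (by positivity) (h.nonneg x)) h.summable_tail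
          (h.abs_sub_pow_mul_succ_le a)
    _ ≤ |a| ^ r + t * (1 + |a|) ^ r * B := by
        rw [h.zero, Nat.cast_zero, zero_sub, abs_neg, mul_one]
        exact add_le_add le_rfl (mul_le_mul_of_nonneg_left hB (by have := h.pos; positivity))

theorem half_pow_mul_le_tsum_abs_sub_pow_mul (h : TailDominated w β r t) (hr : 1 ≤ r)
    {a s : ℝ} (hs : 0 ≤ s) (hsa : s ≤ a) (hst : s ≤ t) :
    (1 / 2) ^ r * s ≤ ∑' x : ℕ, |(x : ℝ) - a| ^ r * w x := by
  have hle := (h.summable_abs_sub_pow_mul a).le_tsum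
  have hnonneg : ∀ x : ℕ, 0 ≤ |(x : ℝ) - a| ^ r * w x := fun x =>
    mul_nonneg (by positivity) (h.nonneg x)
  by_cases ha : 1 / 2 ≤ a
  · have h0 := hle 0 fun x _ => hnonneg x
    rw [h.zero, Nat.cast_zero, zero_sub, abs_neg, mul_one, abs_of_nonneg (by linarith)] at h0
    calc (1 / 2) ^ r * s ≤ (1 / 2) ^ r * (2 * a) ^ r := by
          refine mul_le_mul_of_nonneg_left ?_ (by positivity)
          linarith [le_self_pow₀ (show 1 ≤ 2 * a by linarith) (show r ≠ 0 by omega)]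
      _ = a ^ r := by rw [← mul_pow]; ring_nf
      _ ≤ _ := h0
  · have h1 := hle 1 fun x _ => hnonneg x
    rw [h.one, Nat.cast_one] at h1
    calc (1 / 2) ^ r * s ≤ |1 - a| ^ r * t := by
          refine mul_le_mul (pow_le_pow_left₀ (by norm_num) ?_ r) hst hs (by positivity)
          rw [abs_of_nonneg (by linarith)]; linarith
      _ ≤ _ := h1

theorem nonneg_of_tsum_le (h : TailDominated w β r t)
    (hB : ∑' n : ℕ, ((n : ℝ) + 1) ^ r * β n ≤ B) : 0 ≤ B :=
  (tsum_nonneg fun n => mul_nonneg (by positivity) (h.β_nonneg n)).trans hB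

theorem weightedMean_le (h : TailDominated w β r t)
    (hB : ∑' n : ℕ, ((n : ℝ) + 1) ^ r * β n ≤ B) (hr : 1 ≤ r) : weightedMean w ≤ B * t :=
  (div_le_self (tsum_nonneg fun x => mul_nonneg x.cast_nonneg (h.nonneg x))
    h.one_le_tsum).trans ((h.tsum_natCast_mul_le hB hr).trans_eq (mul_comm t B))

theorem div_le_weightedMean (h : TailDominated w β r t)
    (hB : ∑' n : ℕ, ((n : ℝ) + 1) ^ r * β n ≤ B) (hr : 1 ≤ r) (hT : t ≤ T) :
    t / (1 + T * B) ≤ weightedMean w := by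
  have hB0 := h.nonneg_of_tsum_le hB
  have hF : ∑' x, w x ≤ 1 + T * B :=
    (h.tsum_le hB).trans (add_le_add le_rfl (mul_le_mul_of_nonneg_right hT hB0))
  exact div_le_div₀ (tsum_nonneg fun x => mul_nonneg x.cast_nonneg (h.nonneg x))
    (h.le_tsum_natCast_mul hr) (by linarith [h.one_le_tsum]) hF

theorem weightedAbsCMom_le (h : TailDominated w β r t)
    (hB : ∑' n : ℕ, ((n : ℝ) + 1) ^ r * β n ≤ B) (hr : 1 ≤ r) (hT : t ≤ T) :
    weightedAbsCMom w r ≤ 2 * (1 + T * B) ^ r * B * t := by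
  set m := weightedMean w
  set K := 1 + T * B
  have hB0 := h.nonneg_of_tsum_le hB
  have ht := h.pos
  have hm0 : 0 ≤ m := (div_nonneg ht.le (by nlinarith)).trans (h.div_le_weightedMean hB hr hT)
  have hmBt : m ≤ B * t := h.weightedMean_le hB hr
  have hmK : 1 + m ≤ K := by nlinarith
  have hK : 1 ≤ K := by linarith
  have hmr : m ^ r ≤ K ^ r * (B * t) := by
    calc m ^ r = m ^ (r - 1) * m := (pow_sub_one_mul (by omega) m).symm
      _ ≤ K ^ (r - 1) * (B * t) := mul_le_mul (pow_le_pow_left₀ hm0 (by linarith) _) hmBt hm0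
          (by positivity)
      _ ≤ K ^ r * (B * t) := mul_le_mul_of_nonneg_right (pow_le_pow_right₀ hK (by omega))
          (by positivity)
  calc weightedAbsCMom w r ≤ ∑' x : ℕ, |(x : ℝ) - m| ^ r * w x :=
        div_le_self (tsum_nonneg fun x => mul_nonneg (by positivity) (h.nonneg x))
          h.one_le_tsum
    _ ≤ m ^ r + t * (1 + m) ^ r * B := by
        simpa only [abs_of_nonneg hm0] using h.tsum_abs_sub_pow_mul_le hB m
    _ ≤ K ^ r * (B * t) + t * K ^ r * B := by gcongr
    _ = 2 * K ^ r * B * t := by ring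

theorem le_weightedAbsCMom (h : TailDominated w β r t)
    (hB : ∑' n : ℕ, ((n : ℝ) + 1) ^ r * β n ≤ B) (hr : 1 ≤ r) (hT : t ≤ T) :
    (1 / 2) ^ r / (1 + T * B) ^ 2 * t ≤ weightedAbsCMom w r := by
  set K := 1 + T * B
  have hB0 := h.nonneg_of_tsum_le hB
  have ht := h.pos
  have hK : 1 ≤ K := by nlinarith
  have hF : ∑' x, w x ≤ K :=
    (h.tsum_le hB).trans (add_le_add le_rfl (mul_le_mul_of_nonneg_right hT hB0))
  have hN := h.half_pow_mul_le_tsum_abs_sub_pow_mul hr (by positivity)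
    (h.div_le_weightedMean hB hr hT) (div_le_self ht.le hK)
  calc (1 / 2) ^ r / K ^ 2 * t = (1 / 2) ^ r * (t / K) / K := by field_simp
    _ ≤ weightedAbsCMom w r := div_le_div₀ ((by positivity : (0 : ℝ) ≤ _).trans hN) hN
        (by linarith [h.one_le_tsum]) hF

theorem bounds (h : TailDominated w β r t)
    (hB : ∑' n : ℕ, ((n : ℝ) + 1) ^ r * β n ≤ B) (hr : 1 ≤ r) (hT : t ≤ T) :
    ((1 / 2) ^ r / (1 + T * B) ^ 2 * t ≤ weightedMean w ∧
        weightedMean w ≤ 2 * (1 + T * B) ^ r * B * t) ∧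
      ((1 / 2) ^ r / (1 + T * B) ^ 2 * t ≤ weightedAbsCMom w r ∧
        weightedAbsCMom w r ≤ 2 * (1 + T * B) ^ r * B * t) := by
  have hB0 := h.nonneg_of_tsum_le hB
  have hK : 1 ≤ 1 + T * B := by nlinarith [h.pos]
  have hc : (1 / 2) ^ r / (1 + T * B) ^ 2 * t ≤ t / (1 + T * B) := by
    calc (1 / 2) ^ r / (1 + T * B) ^ 2 * t ≤ 1 / (1 + T * B) * t :=
          mul_le_mul_of_nonneg_right (div_le_div₀ zero_le_one (pow_le_one₀ (by norm_num)
            (by norm_num)) (by positivity) (le_self_pow₀ hK two_ne_zero)) h.pos.le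
      _ = t / (1 + T * B) := one_div_mul_eq_div _ _
  have hC : B * t ≤ 2 * (1 + T * B) ^ r * B * t := by
    nlinarith [one_le_pow₀ hK (n := r), mul_nonneg hB0 h.pos.le]
  exact ⟨⟨hc.trans (h.div_le_weightedMean hB hr hT), (h.weightedMean_le hB hr).trans hC⟩,
    h.le_weightedAbsCMom hB hr hT, h.weightedAbsCMom_le hB hr hT⟩

end TailDominated

theorem tailDominated_psWeight {μs R : ℕ → ℝ} {z A : ℝ} {r : ℕ}
    (hμs : ∀ q, 1 ≤ q → 0 < μs q) (hz : 0 < z) (hratio : ∀ q, 1 ≤ q → z / μs q ≤ A / R q)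
    (hsum : Summable fun n : ℕ => ((n : ℝ) + 1) ^ r * psWeight (fun q => R (q + 1)) A n) :
    TailDominated (psWeight μs z) (psWeight (fun q => R (q + 1)) A) r (z / μs 1) where
  nonneg := psWeight_nonneg hμs hz.le
  zero := psWeight_zero μs z
  one := psWeight_one μs z
  succ_le n := by
    rw [psWeight_succ]
    exact mul_le_mul_of_nonneg_left
      (psWeight_le_psWeight (fun q hq => div_nonneg hz.le (hμs _ (by omega)).le)
        (fun q hq => hratio _ (by omega)) n)
      (div_pos hz (hμs 1 le_rfl)).le
  pos := div_pos hz (hμs 1 le_rfl)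
  summable_tail := hsum

theorem summable_pow_mul_psWeight_succ {R : ℕ → ℝ} {A : ℝ} {r : ℕ} (hA : A ≠ 0) (hR : R 1 ≠ 0)
    (hsum : Summable fun q : ℕ => (q : ℝ) ^ r * A ^ q / ∏ p ∈ range q, R (p + 1)) :
    Summable fun n : ℕ => ((n : ℝ) + 1) ^ r * psWeight (fun q => R (q + 1)) A n := by
  rw [← summable_mul_left_iff (div_ne_zero hA hR)]
  refine ((summable_nat_add_iff 1).2 hsum).congr fun n => ?_
  rw [mul_div_assoc, ← psWeight, psWeight_succ]
  push_cast
  ring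

theorem stmt15 (A : ℝ) (hA : A ∈ Set.Ioo (0 : ℝ) 1) (r : ℕ) (hr : 1 ≤ r)
    (R : ℕ → ℝ) (hRpos : ∀ q, 1 ≤ q → 0 < R q)
    (hsum : Summable fun q : ℕ =>
      (q : ℝ) ^ r * A ^ q / ∏ p ∈ Finset.range q, R (p + 1)) :
    ∃ c C : ℝ, 0 < c ∧ c ≤ C ∧
      ∀ (μs : ℕ → ℝ) (μ z : ℝ),
        (∀ q, 1 ≤ q → 0 < μs q) → 0 < μ → 0 < z → z / μ ≤ A →
        (∀ q, 1 ≤ q → R q * μ ≤ μs q) →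
        (c * (z / μs 1) ≤ psMean μs z ∧ psMean μs z ≤ C * (z / μs 1)) ∧
        (c * (z / μs 1) ≤ psAbsCMom μs z r ∧ psAbsCMom μs z r ≤ C * (z / μs 1)) := by
  obtain ⟨hA0, -⟩ := hA
  have hR1 := hRpos 1 le_rfl
  set β := psWeight (fun q => R (q + 1)) A
  have hβ : Summable fun n : ℕ => ((n : ℝ) + 1) ^ r * β n :=
    summable_pow_mul_psWeight_succ hA0.ne' hR1.ne' hsum
  set B := ∑' n : ℕ, ((n : ℝ) + 1) ^ r * β n
  have hB : 1 ≤ B := by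
    simpa [β, psWeight_zero] using hβ.le_tsum 0 fun n _ =>
      mul_nonneg (by positivity) (psWeight_nonneg (fun q _ => hRpos _ (by omega)) hA0.le n)
  set K := 1 + A / R 1 * B
  have hK : 1 ≤ K := le_add_of_nonneg_right (mul_nonneg (by positivity) (by linarith))
  refine ⟨(1 / 2) ^ r / K ^ 2, 2 * K ^ r * B, by positivity, ?_, ?_⟩
  · calc (1 / 2) ^ r / K ^ 2 ≤ 1 := div_le_one_of_le₀
          ((pow_le_one₀ (by norm_num) (by norm_num)).trans (one_le_pow₀ hK)) (by positivity)
      _ ≤ 2 * K ^ r * B := by nlinarith [one_le_pow₀ hK (n := r)]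
  intro μs μ z hμs hμ hz hzA hRμ
  have hratio : ∀ q, 1 ≤ q → z / μs q ≤ A / R q := fun q hq =>
    div_le_div_of_mul_le hz.le hμ (hRpos q hq) hzA (hRμ q hq)
  rw [psMean_eq_weightedMean, psAbsCMom_eq_weightedAbsCMom]
  exact (tailDominated_psWeight hμs hz hratio hβ).bounds le_rfl hr (hratio 1 le_rfl)
end

section
/- For every z ∈ ℂ with 0 < |z| < 1 and every s ∈ ℂ with Re(s) < 0, Σ_{q≥1} z^q·q^{−s} = Γ(1 − s)·Σ_{n∈ℤ} (−Log z + 2πin)^{s−1}, where Log is the principal branch of the logarithm, the complex powers (−Log z + 2πin)^{s−1} are taken with the principal branch (note Re(−Log z) > 0, so −Log z + 2πin avoids the cut), and the series over n ∈ ℤ converges absolutely. -/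
/-!
Poisson summation applied to `f = gammaKernel (1 - s) (-log z)`, that is `f x = x ^ (-s) * z ^ x`
for `x > 0` and `f x = 0` otherwise. Its values at the positive integers are the terms
`z ^ q * q ^ (-s)`, and its Fourier transform at `ξ` is the Gamma integral
`Γ(1 - s) * (-log z + 2πiξ) ^ (s - 1)` with the complex scale `-log z + 2πiξ` in the right
half-plane; that integral is known for real scales and both sides are holomorphic in the scale, so
the identity theorem extends it. The hypothesis `Re s < 0` makes `f` continuous at `0`, and then
`f` and its transform both decay like `|x| ^ (Re s - 1)`, fast enough for Poisson summation.
-/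

open Complex

open MeasureTheory Set Filter Asymptotics Topology FourierTransform

lemma norm_ofReal_cpow_mul_exp_neg_mul {t : ℝ} (ht : 0 < t) (a c : ℂ) :
    ‖(t : ℂ) ^ a * exp (-(c * t))‖ = t ^ a.re * Real.exp (-c.re * t) := by
  simp [norm_cpow_eq_rpow_re_of_pos ht, norm_exp]

lemma integrableOn_cpow_mul_exp_neg_mul_Ioi {a c : ℂ} (ha : 0 < a.re) (hc : 0 < c.re) :
    IntegrableOn (fun t : ℝ => (t : ℂ) ^ (a - 1) * exp (-(c * t))) (Ioi 0) := by
  have hmeas : AEStronglyMeasurable (fun t : ℝ => (t : ℂ) ^ (a - 1) * exp (-(c * t)))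
      (volume.restrict (Ioi 0)) := by
    refine ContinuousOn.aestronglyMeasurable (fun t ht => ?_) measurableSet_Ioi
    exact ((continuousAt_ofReal_cpow_const t _ (Or.inr (ne_of_gt ht))).mul
      (by fun_prop)).continuousWithinAt
  refine (integrable_norm_iff hmeas).mp ?_
  refine (integrableOn_rpow_mul_exp_neg_mul_rpow (p := 1) (s := (a - 1).re) (by simpa using ha)
    one_pos hc).congr_fun (fun t ht => ?_) measurableSet_Ioi
  simp only [Real.rpow_one, norm_ofReal_cpow_mul_exp_neg_mul ht]

lemma hasDerivAt_integral_cpow_mul_exp_neg_mul {a c : ℂ} (ha : 0 < a.re) (hc : 0 < c.re) :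
    HasDerivAt (fun c : ℂ => ∫ t : ℝ in Ioi 0, (t : ℂ) ^ (a - 1) * exp (-(c * t)))
      (∫ t : ℝ in Ioi 0, -(t : ℂ) * ((t : ℂ) ^ (a - 1) * exp (-(c * t)))) c := by
  have hc2 : 0 < (c / 2).re := by simpa using hc
  refine (hasDerivAt_integral_of_dominated_loc_of_deriv_le (μ := volume.restrict (Ioi 0))
    (F := fun (c : ℂ) (t : ℝ) => (t : ℂ) ^ (a - 1) * exp (-(c * t)))
    (F' := fun (c : ℂ) (t : ℝ) => -(t : ℂ) * ((t : ℂ) ^ (a - 1) * exp (-(c * t))))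
    (Metric.ball_mem_nhds c hc2)
    (bound := fun t : ℝ => ‖(t : ℂ) ^ (a + 1 - 1) * exp (-(c / 2 * t))‖) ?_
    (integrableOn_cpow_mul_exp_neg_mul_Ioi ha hc) ?_ ?_
    (integrableOn_cpow_mul_exp_neg_mul_Ioi (by simp; linarith) hc2).norm ?_).2
  · exact .of_forall fun c' => (by fun_prop : Measurable fun t : ℝ =>
      (t : ℂ) ^ (a - 1) * exp (-(c' * t))).aestronglyMeasurable
  · exact (by fun_prop : Measurable fun t : ℝ =>
      -(t : ℂ) * ((t : ℂ) ^ (a - 1) * exp (-(c * t)))).aestronglyMeasurable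
  · filter_upwards [self_mem_ae_restrict measurableSet_Ioi] with t (ht : 0 < t) c' hc'
    have hre : (c / 2).re ≤ c'.re := by
      have := (abs_re_le_norm (c' - c)).trans (mem_ball_iff_norm.mp hc').le
      simp only [sub_re, div_ofNat_re] at this ⊢
      linarith [abs_le.mp this]
    rw [norm_mul, norm_neg, norm_ofReal_cpow_mul_exp_neg_mul ht,
      norm_ofReal_cpow_mul_exp_neg_mul ht, add_sub_cancel_right, norm_real,
      Real.norm_of_nonneg ht.le, sub_re, one_re, Real.rpow_sub_one ht.ne', ← mul_assoc,
      mul_div_cancel₀ _ ht.ne']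
    gcongr
  · filter_upwards with t c' _
    exact (((hasDerivAt_mul_const (t : ℂ)).neg.cexp).const_mul _).congr_deriv
      (by simp only [Pi.neg_apply]; ring)

lemma integral_cpow_mul_exp_neg_mul_Ioi_of_re_pos {a c : ℂ} (ha : 0 < a.re) (hc : 0 < c.re) :
    ∫ t : ℝ in Ioi 0, (t : ℂ) ^ (a - 1) * exp (-(c * t)) = Gamma a * c ^ (-a) := by
  let U : Set ℂ := {c | 0 < c.re}
  have hU : IsOpen U := isOpen_lt continuous_const continuous_re
  have hF : AnalyticOnNhd ℂ
      (fun c : ℂ => ∫ t : ℝ in Ioi 0, (t : ℂ) ^ (a - 1) * exp (-(c * t))) U :=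
    DifferentiableOn.analyticOnNhd (fun c hc =>
      (hasDerivAt_integral_cpow_mul_exp_neg_mul ha hc).differentiableAt.differentiableWithinAt) hU
  have hG : AnalyticOnNhd ℂ (fun c : ℂ => Gamma a * c ^ (-a)) U :=
    DifferentiableOn.analyticOnNhd (fun c hc => ((differentiableAt_id.cpow_const
      (mem_slitPlane_iff.mpr (Or.inl hc))).const_mul _).differentiableWithinAt) hU
  have hreal : ∀ r : ℝ, 0 < r →
      ∫ t : ℝ in Ioi 0, (t : ℂ) ^ (a - 1) * exp (-(r * t)) = Gamma a * (r : ℂ) ^ (-a) := by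
    intro r hr
    rw [integral_cpow_mul_exp_neg_mul_Ioi ha hr, one_div, inv_cpow _ _ (by
      rw [arg_ofReal_of_nonneg hr.le]; exact Real.pi_ne_zero.symm), ← cpow_neg, mul_comm]
  have hfreq : ∃ᶠ c in 𝓝[≠] (1 : ℂ),
      (∫ t : ℝ in Ioi 0, (t : ℂ) ^ (a - 1) * exp (-(c * t))) = Gamma a * c ^ (-a) := by
    have hmaps : Tendsto ((↑) : ℝ → ℂ) (𝓝[≠] 1) (𝓝[≠] 1) :=
      continuous_ofReal.continuousWithinAt.tendsto_nhdsWithin fun x hx => by simpa using hx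
    refine hmaps.frequently (Eventually.frequently ?_)
    filter_upwards [nhdsWithin_le_nhds (Ioi_mem_nhds one_pos)] with r hr using hreal r hr
  exact hF.eqOn_of_preconnected_of_frequently_eq hG (convex_halfSpace_re_gt 0).isPreconnected
    (by simp [U]) hfreq hc

noncomputable def gammaKernel (a w : ℂ) : ℝ → ℂ :=
  (Ioi 0).indicator fun x => (x : ℂ) ^ (a - 1) * exp (-(w * x))

lemma fourier_gammaKernel {a w : ℂ} (ha : 0 < a.re) (hw : 0 < w.re) (ξ : ℝ) :
    𝓕 (gammaKernel a w) ξ = Gamma a * (w + 2 * Real.pi * ξ * I) ^ (-a) := by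
  rw [Real.fourier_real_eq_integral_exp_smul, gammaKernel]
  simp_rw [← indicator_smul_apply (Ioi 0) fun v : ℝ => exp (↑(-2 * Real.pi * v * ξ) * I)]
  rw [integral_indicator measurableSet_Ioi,
    ← integral_cpow_mul_exp_neg_mul_Ioi_of_re_pos ha (by simpa using hw)]
  refine setIntegral_congr_fun measurableSet_Ioi fun x _ => ?_
  simp only [smul_eq_mul]
  rw [mul_left_comm, ← exp_add]
  congr 2
  push_cast
  ring

lemma continuous_gammaKernel {a : ℂ} (ha : 1 < a.re) (w : ℂ) :
    Continuous (gammaKernel a w) := by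
  have hre : 0 < (a - 1).re := by simpa using ha
  refine Continuous.indicator ?_ ?_
  · intro x hx
    rw [frontier_Ioi, mem_singleton_iff] at hx
    have : a - 1 ≠ 0 := fun h => by simp [h] at hre
    simp [hx, zero_cpow this]
  · exact continuous_iff_continuousAt.mpr fun x =>
      (continuousAt_ofReal_cpow_const x _ (Or.inl hre)).mul (by fun_prop)

lemma gammaKernel_isBigO_rpow (a : ℂ) {w : ℂ} (hw : 0 < w.re) (b : ℝ) :
    gammaKernel a w =O[cocompact ℝ] (|·| ^ (-b)) := by
  rw [cocompact_eq_atBot_atTop, isBigO_sup]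
  constructor
  · refine EventuallyEq.trans_isBigO ?_ (isBigO_zero _ _)
    filter_upwards [eventually_le_atBot 0] with x hx
    exact indicator_of_notMem (not_lt.mpr hx) _
  · refine isBigO_iff.mpr ⟨1, ?_⟩
    filter_upwards [(tendsto_rpow_mul_exp_neg_mul_atTop_nhds_zero (a.re - 1 + b) w.re hw
      ).eventually_le_const zero_lt_one, eventually_gt_atTop 0] with x hx hx0
    rw [gammaKernel, indicator_of_mem (mem_Ioi.mpr hx0), norm_ofReal_cpow_mul_exp_neg_mul hx0,
      Real.norm_of_nonneg (by positivity), abs_of_pos hx0, one_mul]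
    calc x ^ (a - 1).re * Real.exp (-w.re * x)
        = x ^ (a.re - 1 + b) * Real.exp (-w.re * x) * x ^ (-b) := by
          rw [mul_right_comm, ← Real.rpow_add hx0]; simp
      _ ≤ 1 * x ^ (-b) := by gcongr
      _ = x ^ (-b) := one_mul _

lemma norm_cpow_le_mul_exp_pi (c t : ℂ) :
    ‖c ^ t‖ ≤ ‖c‖ ^ t.re * Real.exp (Real.pi * |t.im|) := by
  refine (norm_cpow_le c t).trans ?_
  rw [div_eq_mul_inv, ← Real.exp_neg]
  gcongr
  calc -(arg c * t.im) ≤ |arg c| * |t.im| := by rw [← abs_mul]; exact neg_le_abs _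
    _ ≤ Real.pi * |t.im| := by gcongr; exact abs_arg_le_pi c

lemma isBigO_cpow_add_two_pi_mul_I (w : ℂ) {t : ℂ} (ht : t.re ≤ 0) :
    (fun ξ : ℝ => (w + 2 * Real.pi * ξ * I) ^ t) =O[cocompact ℝ] (|·| ^ t.re) := by
  refine isBigO_iff.mpr ⟨Real.exp (Real.pi * |t.im|), ?_⟩
  filter_upwards [tendsto_norm_cocompact_atTop.eventually_ge_atTop ‖w‖,
    tendsto_norm_cocompact_atTop.eventually_gt_atTop 0] with ξ hξw hξ0
  rw [Real.norm_eq_abs] at hξw hξ0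
  have hle : |ξ| ≤ ‖w + 2 * Real.pi * ξ * I‖ := by
    have h2π : ‖(2 * Real.pi * ξ * I : ℂ)‖ = 2 * Real.pi * |ξ| := by
      simp [abs_of_pos Real.pi_pos]
    have := norm_sub_norm_le (2 * Real.pi * ξ * I : ℂ) (-w)
    rw [sub_neg_eq_add, norm_neg, add_comm, h2π] at this
    nlinarith [Real.pi_gt_three]
  rw [Real.norm_of_nonneg (by positivity), mul_comm (Real.exp _)]
  calc ‖(w + 2 * Real.pi * ξ * I) ^ t‖
      ≤ ‖w + 2 * Real.pi * ξ * I‖ ^ t.re * Real.exp (Real.pi * |t.im|) :=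
        norm_cpow_le_mul_exp_pi _ _
    _ ≤ |ξ| ^ t.re * Real.exp (Real.pi * |t.im|) :=
        mul_le_mul_of_nonneg_right (Real.rpow_le_rpow_of_nonpos hξ0 hle ht) (Real.exp_pos _).le

lemma fourier_gammaKernel_isBigO_rpow {a w : ℂ} (ha : 0 < a.re) (hw : 0 < w.re) :
    𝓕 (gammaKernel a w) =O[cocompact ℝ] (|·| ^ (-a.re)) := by
  rw [funext (fourier_gammaKernel ha hw)]
  simpa using (isBigO_cpow_add_two_pi_mul_I w (t := -a) (by simpa using ha.le)).const_mul_left _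

lemma summable_norm_cpow_add_two_pi_mul_I (w : ℂ) {t : ℂ} (ht : t.re < -1) :
    Summable fun n : ℤ => ‖(w + 2 * Real.pi * (n : ℂ) * I) ^ t‖ := by
  have hO := (isBigO_cpow_add_two_pi_mul_I w (t := t) (by linarith)).comp_tendsto
    Int.tendsto_coe_cofinite
  rw [← neg_neg t.re] at hO
  simpa using (summable_of_isBigO (Real.summable_abs_int_rpow (by linarith)) hO).norm

lemma tsum_gammaKernel_int {a w : ℂ} (ha : 1 < a.re) (hw : 0 < w.re) :
    ∑' n : ℤ, gammaKernel a w n =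
      Gamma a * ∑' n : ℤ, (w + 2 * Real.pi * (n : ℂ) * I) ^ (-a) := by
  have := Real.tsum_eq_tsum_fourier_of_rpow_decay (continuous_gammaKernel ha w) ha
    (gammaKernel_isBigO_rpow a hw a.re) (fourier_gammaKernel_isBigO_rpow (by linarith) hw) 0
  simp only [zero_add, QuotientAddGroup.mk_zero, fourier_eval_zero, mul_one] at this
  rw [this, ← tsum_mul_left]
  simp [fourier_gammaKernel (zero_lt_one.trans ha) hw]

lemma tsum_int_eq_tsum_nat_add_one_of_nonpos {α : Type*} [AddCommMonoid α] [TopologicalSpace α]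
    {f : ℤ → α} (hf : ∀ n ≤ 0, f n = 0) : ∑' n, f n = ∑' q : ℕ, f (q + 1) := by
  have hinj : Function.Injective fun q : ℕ => (q : ℤ) + 1 := fun p q h => by simpa using h
  refine (hinj.tsum_eq fun n hn => ?_).symm
  have : 0 < n := not_le.mp (mt (hf n) hn)
  exact ⟨(n - 1).toNat, by simp only; omega⟩

lemma gammaKernel_neg_log_natCast {z : ℂ} (hz : z ≠ 0) (a : ℂ) {n : ℕ} (hn : 0 < n) :
    gammaKernel a (-log z) n = z ^ n * (n : ℂ) ^ (a - 1) := by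
  rw [gammaKernel, indicator_of_mem (by simpa using hn), ofReal_natCast, neg_mul, neg_neg,
    mul_comm (log z), exp_nat_mul, exp_log hz, mul_comm]

theorem stmt18 (z : ℂ) (hz0 : z ≠ 0) (hz : ‖z‖ < 1)
    (s : ℂ) (hs : s.re < 0) :
    Summable (fun n : ℤ =>
      ‖(-Complex.log z + 2 * Real.pi * (n : ℂ) * Complex.I) ^ (s - 1)‖) ∧
    ∑' q : ℕ, z ^ (q + 1) * (((q + 1 : ℕ) : ℂ)) ^ (-s)
      = Complex.Gamma (1 - s) *
          ∑' n : ℤ, (-Complex.log z + 2 * Real.pi * (n : ℂ) * Complex.I) ^ (s - 1) := by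
  have hw : 0 < (-log z).re := by
    simpa [log_re] using Real.log_neg (norm_pos_iff.mpr hz0) hz
  have ha : 1 < (1 - s).re := by simp; linarith
  refine ⟨summable_norm_cpow_add_two_pi_mul_I _ (by simp; linarith), ?_⟩
  have hterm (q : ℕ) : gammaKernel (1 - s) (-log z) ((q : ℤ) + 1 : ℤ)
      = z ^ (q + 1) * (((q + 1 : ℕ) : ℂ)) ^ (-s) := by
    rw [← sub_sub_cancel_left 1 s, ← gammaKernel_neg_log_natCast hz0 _ q.succ_pos]
    push_cast; rfl
  rw [← tsum_congr hterm, ← tsum_int_eq_tsum_nat_add_one_of_nonpos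
    (f := fun n : ℤ => gammaKernel (1 - s) (-log z) n) fun n hn =>
    indicator_of_notMem (by simpa using hn) _, tsum_gammaKernel_int ha hw, neg_sub]
end
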